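/- For all 1 ≤ i,j ≤ N and all m ≥ 1, the polynomial [ι(F^{(1)}_{ij}), tr F(u)ᵐ] ∈ U(𝔤_ℓ)[u] has degree strictly less than mℓ − ℓ; that is, the coefficient of uʳ in this commutator vanishes for every r ≥ mℓ − ℓ. (Intermediate claim in the proof of Proposition 3.1.) -/

import Mathlib

/-!
Invariance of `B` and duality of the bases give `[f_{ij}, y] = Σₚ ρ(y)_{ip} f_{pj} − Σₚ ρ(y)_{pj} f_{ip}`.
Since bracketing with `v ⊗ x` raises the `v`-degree by one, this yields, with `M = ρ(f_{ij})`
(a matrix of scalars) and `F⁽⁰⁾(u) = (ι(F^{(0)}_{kl}))` (constant in `u`),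
`[ι(F^{(1)}_{ij}), F(u)] · u = [F(u) − F⁽⁰⁾, M]`.
Bracketing with a fixed element is a derivation, so
`[ι(F^{(1)}_{ij}), tr F(u)ᵐ] · u = Σₖ tr (Fᵏ [F − F⁽⁰⁾, M] F^{m−1−k})`; the `F`-part telescopes to
`tr [Fᵐ, M] = 0`, and what remains, `−Σₖ tr (Fᵏ [F⁽⁰⁾, M] F^{m−1−k})`, has degree at most `(m − 1)ℓ`.
-/

/- Context: 𝔤 finite-dimensional simple over ℂ, B nondegenerate symmetric invariant form,
dual bases Jup = (Jᵃ), Jlo = (J_a), ρ faithful on ℂᴺ, f_{ij} = −∑ₐ (ρ(Jᵃ))_{ij}·J_a;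
𝔤_ℓ = 𝔤 ⊗ ℂ[v]/(v^{ℓ+1}) the Takiff algebra, F^{(r)}_{ij} = f_{ij} ⊗ vʳ,
F(u) the N×N matrix over U(𝔤_ℓ)[u] with entries ∑_{r=0}^ℓ ι(F^{(r)}_{ij})uʳ,
tr F(u)ᵐ = ∑_r θ_m^{(r)} uʳ. -/

open TensorProduct

attribute [local instance 100] LieRing.ofAssociativeRing

/-- The truncated polynomial ring `ℂ[v]/(v^{ℓ+1})`. -/
abbrev TruncPoly (ℓ : ℕ) : Type :=
  Polynomial ℂ ⧸ Ideal.span {(Polynomial.X : Polynomial ℂ) ^ (ℓ + 1)}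

/-- The image of `vʳ` in `ℂ[v]/(v^{ℓ+1})`. -/
noncomputable def vpow (ℓ r : ℕ) : TruncPoly ℓ :=
  Ideal.Quotient.mk _ (Polynomial.X ^ r)

/-- A base-changed Lie algebra is also a Lie algebra over the base field. -/
noncomputable instance instLieAlgebraCBaseChange {g : Type} [LieRing g] [LieAlgebra ℂ g]
    {A : Type} [CommRing A] [Algebra ℂ A] : LieAlgebra ℂ (A ⊗[ℂ] g) where
  lie_smul t x y := by
    rw [← algebraMap_smul A t y, ← algebraMap_smul A t ⁅x, y⁆]
    exact (LieAlgebra.ExtendScalars.instLieAlgebra ℂ A g).lie_smul _ x y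

/-- The element `f_{ij} = −∑ₐ (ρ(Jᵃ))_{ij}·J_a ∈ 𝔤`. -/
noncomputable def fElem {d N : ℕ} {g : Type} [LieRing g] [LieAlgebra ℂ g]
    (ρ : g →ₗ⁅ℂ⁆ Matrix (Fin N) (Fin N) ℂ)
    (Jup Jlo : Module.Basis (Fin d) ℂ g) (i j : Fin N) : g :=
  -(∑ a : Fin d, (ρ (Jup a)) i j • Jlo a)

/-- The element `F^{(r)}_{ij} = f_{ij} ⊗ vʳ` of the Takiff algebra `𝔤_ℓ`. -/
noncomputable def takiffF {d N : ℕ} {g : Type} [LieRing g] [LieAlgebra ℂ g]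
    (ρ : g →ₗ⁅ℂ⁆ Matrix (Fin N) (Fin N) ℂ) (Jup Jlo : Module.Basis (Fin d) ℂ g)
    (ℓ r : ℕ) (i j : Fin N) : TruncPoly ℓ ⊗[ℂ] g :=
  vpow ℓ r ⊗ₜ fElem ρ Jup Jlo i j

/-- The matrix `F(u)` over `U(𝔤_ℓ)[u]` with entries `∑_{r=0}^ℓ ι(F^{(r)}_{ij})·uʳ`. -/
noncomputable def takiffFMat {d N : ℕ} {g : Type} [LieRing g] [LieAlgebra ℂ g]
    (ρ : g →ₗ⁅ℂ⁆ Matrix (Fin N) (Fin N) ℂ) (Jup Jlo : Module.Basis (Fin d) ℂ g) (ℓ : ℕ) :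
    Matrix (Fin N) (Fin N)
      (Polynomial (UniversalEnvelopingAlgebra ℂ (TruncPoly ℓ ⊗[ℂ] g))) :=
  Matrix.of fun i j => ∑ r : Fin (ℓ + 1),
    Polynomial.C (UniversalEnvelopingAlgebra.ι ℂ (takiffF ρ Jup Jlo ℓ (r : ℕ) i j)) *
      Polynomial.X ^ (r : ℕ)

open Polynomial

theorem lie_pow_eq_sum {R : Type*} [Ring R] (a b : R) (m : ℕ) :
    ⁅a, b ^ m⁆ = ∑ k ∈ Finset.range m, b ^ k * ⁅a, b⁆ * b ^ (m - 1 - k) := by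
  induction m with
  | zero => simp [Ring.lie_def]
  | succ m ih =>
    have hstep : ⁅a, b ^ (m + 1)⁆ = ⁅a, b ^ m⁆ * b + b ^ m * ⁅a, b⁆ := by
      simp only [Ring.lie_def, pow_succ]
      noncomm_ring
    rw [hstep, ih, Finset.sum_mul, Finset.sum_range_succ, Nat.add_sub_cancel, Nat.sub_self,
      pow_zero, mul_one]
    congr 1
    refine Finset.sum_congr rfl fun k hk => ?_
    rw [mul_assoc, ← pow_succ, show m - 1 - k + 1 = m - k by grind]

namespace Matrix

variable {n : Type*} [Fintype n]

section Commutator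

variable {R : Type*}

theorem trace_mul_comm_of_commute [NonUnitalNonAssocSemiring R] (A M : Matrix n n R)
    (hM : ∀ k l y, Commute (M k l) y) : (A * M).trace = (M * A).trace := by
  simp only [trace, diag_apply, mul_apply]
  rw [Finset.sum_comm]
  exact Finset.sum_congr rfl fun k _ => Finset.sum_congr rfl fun l _ => (hM k l _).eq.symm

variable [DecidableEq n] [Ring R]

theorem lie_scalar_mul_scalar_apply (t y : R) (G : Matrix n n R) (k l : n) :
    (⁅scalar n t, G⁆ * scalar n y) k l = ⁅t, G k l⁆ * y := by
  simp [Ring.lie_def]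

theorem trace_lie_scalar_mul_scalar (t y : R) (G : Matrix n n R) :
    (⁅scalar n t, G⁆ * scalar n y).trace = ⁅t, G.trace⁆ * y := by
  simp only [trace, diag_apply, lie_scalar_mul_scalar_apply]
  rw [← Finset.sum_mul, lie_sum]

theorem lie_trace_pow_mul {S : Type*} [CommSemiring S] [Algebra S R] {t x : R}
    {F Δ : Matrix n n R} {M₀ : Matrix n n S}
    (hF : ⁅scalar n t, F⁆ * scalar n x = ⁅F - Δ, M₀.map (algebraMap S R)⁆)
    (hx : ∀ y, Commute x y) (m : ℕ) :
    ⁅t, (F ^ m).trace⁆ * x = -∑ k ∈ Finset.range m,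
      (F ^ k * ⁅Δ, M₀.map (algebraMap S R)⁆ * F ^ (m - 1 - k)).trace := by
  set M := M₀.map (algebraMap S R)
  have hM : ∀ k l y, Commute (M k l) y := fun k l => Algebra.commute_algebraMap_left _
  have hterm : ∀ k, F ^ k * ⁅scalar n t, F⁆ * F ^ (m - 1 - k) * scalar n x
      = -(F ^ k * ⁅M, F⁆ * F ^ (m - 1 - k)) - F ^ k * ⁅Δ, M⁆ * F ^ (m - 1 - k) := by
    intro k
    rw [mul_assoc _ (F ^ _), ← (scalar_commute x hx _).eq, ← mul_assoc, mul_assoc (F ^ k), hF]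
    simp only [Ring.lie_def]
    noncomm_ring
  have htrace : (⁅M, F ^ m⁆).trace = 0 := by
    rw [Ring.lie_def, trace_sub, trace_mul_comm_of_commute _ _ hM, sub_self]
  rw [← trace_lie_scalar_mul_scalar, lie_pow_eq_sum, Finset.sum_mul]
  simp only [hterm, Finset.sum_sub_distrib, Finset.sum_neg_distrib, trace_sub, trace_neg,
    trace_sum]
  rw [← trace_sum, ← lie_pow_eq_sum, htrace, neg_zero, zero_sub]

end Commutator

section Degree

variable {S : Type*} [Semiring S]

theorem natDegree_mul_apply_le {A B : Matrix n n S[X]} {a b : ℕ}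
    (hA : ∀ k l, (A k l).natDegree ≤ a) (hB : ∀ k l, (B k l).natDegree ≤ b) (k l : n) :
    ((A * B) k l).natDegree ≤ a + b :=
  natDegree_sum_le_of_forall_le _ _ fun p _ =>
    natDegree_mul_le.trans (add_le_add (hA k p) (hB p l))

theorem natDegree_pow_apply_le [DecidableEq n] {A : Matrix n n S[X]} {a : ℕ}
    (hA : ∀ k l, (A k l).natDegree ≤ a) (m : ℕ) (k l : n) :
    ((A ^ m) k l).natDegree ≤ m * a := by
  induction m generalizing k l with
  | zero => by_cases h : k = l <;> simp [h]
  | succ m ih => simpa [pow_succ, add_mul] using natDegree_mul_apply_le ih hA k l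

theorem natDegree_trace_le {A : Matrix n n S[X]} {a : ℕ} (hA : ∀ k l, (A k l).natDegree ≤ a) :
    A.trace.natDegree ≤ a :=
  natDegree_sum_le_of_forall_le _ _ fun k _ => hA k k

theorem natDegree_lie_apply_le {R : Type*} [Ring R] {A B : Matrix n n R[X]} {a b : ℕ}
    (hA : ∀ k l, (A k l).natDegree ≤ a) (hB : ∀ k l, (B k l).natDegree ≤ b) (k l : n) :
    (⁅A, B⁆ k l).natDegree ≤ a + b := by
  rw [Ring.lie_def, sub_apply]
  exact (natDegree_sub_le _ _).trans (max_le (natDegree_mul_apply_le hA hB k l)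
    ((natDegree_mul_apply_le hB hA k l).trans_eq (add_comm b a)))

theorem natDegree_sum_trace_pow_mul_pow_le [DecidableEq n] {F C : Matrix n n S[X]} {a : ℕ}
    (hF : ∀ k l, (F k l).natDegree ≤ a) (hC : ∀ k l, (C k l).natDegree ≤ 0) (m : ℕ) :
    (∑ k ∈ Finset.range m, (F ^ k * C * F ^ (m - 1 - k)).trace).natDegree ≤ (m - 1) * a := by
  refine natDegree_sum_le_of_forall_le _ _ fun k hk => natDegree_trace_le fun p q => ?_
  have hk : k + (m - 1 - k) = m - 1 := by grind
  calc _ ≤ k * a + 0 + (m - 1 - k) * a :=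
        natDegree_mul_apply_le (natDegree_mul_apply_le (natDegree_pow_apply_le hF k) hC)
          (natDegree_pow_apply_le hF _) p q
    _ = (m - 1) * a := by rw [add_zero, ← add_mul, hk]

end Degree

end Matrix

section DualBases

variable {R L ι : Type*} [CommRing R] [DecidableEq ι]

section Module

variable [AddCommGroup L] [Module R L] {B : L →ₗ[R] L →ₗ[R] R} {Jup Jlo : Module.Basis ι R L}

theorem repr_eq_pairing_left (hdual : ∀ a b, B (Jlo a) (Jup b) = if a = b then 1 else 0)
    (x : L) (c : ι) : Jup.repr x c = B (Jlo c) x := by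
  have : Jup.coord c = B (Jlo c) := Jup.ext fun b => by simp [hdual, Finsupp.single_apply, eq_comm]
  exact LinearMap.congr_fun this x

theorem repr_eq_pairing_right (hdual : ∀ a b, B (Jlo a) (Jup b) = if a = b then 1 else 0)
    (x : L) (c : ι) : Jlo.repr x c = B x (Jup c) := by
  have : Jlo.coord c = B.flip (Jup c) := Jlo.ext fun b => by simp [hdual, Finsupp.single_apply]
  exact LinearMap.congr_fun this x

end Module

variable [Fintype ι] [LieRing L] [LieAlgebra R L] {B : L →ₗ[R] L →ₗ[R] R}
  {Jup Jlo : Module.Basis ι R L}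

theorem lie_sum_smul_dual (hBinv : ∀ x y z, B ⁅x, y⁆ z = B x ⁅y, z⁆)
    (hdual : ∀ a b, B (Jlo a) (Jup b) = if a = b then 1 else 0) (φ : L →ₗ[R] R) (y : L) :
    ⁅∑ a, φ (Jup a) • Jlo a, y⁆ = ∑ c, φ ⁅y, Jup c⁆ • Jlo c := by
  have hlo : ∀ a, ⁅Jlo a, y⁆ = ∑ c, B (Jlo a) ⁅y, Jup c⁆ • Jlo c := fun a => by
    conv_lhs => rw [← Jlo.sum_repr ⁅Jlo a, y⁆]
    simp only [repr_eq_pairing_right hdual, hBinv]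
  have hφ : ∀ z, ∑ a, B (Jlo a) z * φ (Jup a) = φ z := fun z => by
    conv_rhs => rw [← Jup.sum_repr z]
    simp [repr_eq_pairing_left hdual]
  simp only [sum_lie, smul_lie, hlo, Finset.smul_sum, smul_smul]
  rw [Finset.sum_comm]
  simp only [← Finset.sum_smul, mul_comm (φ _), hφ]

end DualBases

theorem vpow_mul (ℓ a b : ℕ) : vpow ℓ a * vpow ℓ b = vpow ℓ (a + b) := by
  rw [vpow, vpow, vpow, ← map_mul, ← pow_add]

theorem vpow_eq_zero {ℓ s : ℕ} (h : ℓ < s) : vpow ℓ s = 0 :=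
  Ideal.Quotient.eq_zero_iff_mem.mpr (Ideal.mem_span_singleton.mpr (pow_dvd_pow _ h))

section Takiff

variable {d N : ℕ} {g : Type} [LieRing g] [LieAlgebra ℂ g] {B : g →ₗ[ℂ] g →ₗ[ℂ] ℂ}
  {Jup Jlo : Module.Basis (Fin d) ℂ g} (ρ : g →ₗ⁅ℂ⁆ Matrix (Fin N) (Fin N) ℂ)

theorem lie_fElem (hBinv : ∀ x y z, B ⁅x, y⁆ z = B x ⁅y, z⁆)
    (hdual : ∀ a b, B (Jlo a) (Jup b) = if a = b then 1 else 0) (i j : Fin N) (y : g) :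
    ⁅fElem ρ Jup Jlo i j, y⁆
      = ∑ p, ρ y i p • fElem ρ Jup Jlo p j - ∑ p, ρ y p j • fElem ρ Jup Jlo i p := by
  have h := lie_sum_smul_dual hBinv hdual (Matrix.entryLinearMap ℂ ℂ i j ∘ₗ ρ.toLinearMap) y
  simp only [LinearMap.comp_apply, LieHom.coe_toLinearMap, Matrix.entryLinearMap_apply,
    LieHom.map_lie, Ring.lie_def, Matrix.sub_apply, Matrix.mul_apply] at h
  simp only [fElem, neg_lie, h, sub_smul, Finset.sum_smul, Finset.smul_sum, smul_neg, smul_smul,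
    Finset.sum_neg_distrib, Finset.sum_sub_distrib]
  rw [Finset.sum_comm (γ := Fin d), Finset.sum_comm (γ := Fin d)]
  simp only [mul_comm (ρ y _ _)]
  abel

theorem lie_fElem_fElem (hBinv : ∀ x y z, B ⁅x, y⁆ z = B x ⁅y, z⁆)
    (hdual : ∀ a b, B (Jlo a) (Jup b) = if a = b then 1 else 0) (i j k l : Fin N) :
    ⁅fElem ρ Jup Jlo i j, fElem ρ Jup Jlo k l⁆
      = ∑ p, ρ (fElem ρ Jup Jlo i j) p l • fElem ρ Jup Jlo k p
        - ∑ p, ρ (fElem ρ Jup Jlo i j) k p • fElem ρ Jup Jlo p l := by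
  rw [← lie_skew, lie_fElem ρ hBinv hdual, neg_sub]

noncomputable def takiffMonomial (ℓ s : ℕ) :
    g →ₗ[ℂ] (UniversalEnvelopingAlgebra ℂ (TruncPoly ℓ ⊗[ℂ] g))[X] :=
  (monomial s).restrictScalars ℂ ∘ₗ (UniversalEnvelopingAlgebra.ι ℂ).toLinearMap ∘ₗ
    TensorProduct.mk ℂ (TruncPoly ℓ) g (vpow ℓ s)

noncomputable def takiffSeries (ℓ : ℕ) :
    g →ₗ[ℂ] (UniversalEnvelopingAlgebra ℂ (TruncPoly ℓ ⊗[ℂ] g))[X] :=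
  ∑ s : Fin (ℓ + 1), takiffMonomial ℓ s

theorem takiffMonomial_apply (ℓ s : ℕ) (x : g) :
    takiffMonomial ℓ s x = C (UniversalEnvelopingAlgebra.ι ℂ (vpow ℓ s ⊗ₜ[ℂ] x)) * X ^ s := by
  simp [takiffMonomial, C_mul_X_pow_eq_monomial]

theorem natDegree_takiffSeries_le (ℓ : ℕ) (x : g) : (takiffSeries ℓ x).natDegree ≤ ℓ := by
  rw [takiffSeries, LinearMap.sum_apply]
  refine natDegree_sum_le_of_forall_le _ _ fun s _ => ?_
  rw [takiffMonomial_apply]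
  exact (natDegree_C_mul_X_pow_le _ _).trans (Fin.is_le s)

theorem takiffFMat_apply (ℓ : ℕ) (k l : Fin N) :
    takiffFMat ρ Jup Jlo ℓ k l = takiffSeries ℓ (fElem ρ Jup Jlo k l) := by
  simp [takiffFMat, takiffSeries, takiffMonomial_apply, takiffF]

theorem lie_C_takiffMonomial_mul_X (ℓ s : ℕ) (x y : g) :
    ⁅C (UniversalEnvelopingAlgebra.ι ℂ (vpow ℓ 1 ⊗ₜ[ℂ] x)), takiffMonomial ℓ s y⁆ * X
      = takiffMonomial ℓ (s + 1) ⁅x, y⁆ := by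
  have hι : UniversalEnvelopingAlgebra.ι ℂ (vpow ℓ (s + 1) ⊗ₜ[ℂ] ⁅x, y⁆)
      = ⁅UniversalEnvelopingAlgebra.ι ℂ (vpow ℓ 1 ⊗ₜ[ℂ] x),
          UniversalEnvelopingAlgebra.ι ℂ (vpow ℓ s ⊗ₜ[ℂ] y)⁆ := by
    rw [← LieHom.map_lie, LieAlgebra.ExtendScalars.bracket_tmul, vpow_mul, Nat.add_comm 1 s]
  rw [takiffMonomial_apply, takiffMonomial_apply, hι]
  simp only [Ring.lie_def, C_sub, C_mul, sub_mul, mul_assoc, X_pow_mul, pow_succ]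

-- The top term `vˡ⁺¹ ⊗ [x, y]` produced by the shift vanishes in `𝔤_ℓ`.
theorem lie_C_takiffSeries_mul_X (ℓ : ℕ) (x y : g) :
    ⁅C (UniversalEnvelopingAlgebra.ι ℂ (vpow ℓ 1 ⊗ₜ[ℂ] x)), takiffSeries ℓ y⁆ * X
      = takiffSeries ℓ ⁅x, y⁆ - takiffMonomial ℓ 0 ⁅x, y⁆ := by
  have htop : takiffMonomial ℓ (ℓ + 1) ⁅x, y⁆ = 0 := by
    rw [takiffMonomial_apply, vpow_eq_zero (Nat.lt_succ_self ℓ)]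
    simp
  have hshift := Finset.sum_range_succ' (fun s => takiffMonomial ℓ s ⁅x, y⁆) (ℓ + 1)
  rw [Finset.sum_range_succ, htop, add_zero] at hshift
  simp only [takiffSeries, LinearMap.sum_apply, lie_sum, Finset.sum_mul,
    lie_C_takiffMonomial_mul_X]
  rw [Fin.sum_univ_eq_sum_range (fun s => takiffMonomial ℓ s _),
    Fin.sum_univ_eq_sum_range (fun s => takiffMonomial ℓ (s + 1) _), hshift, add_sub_cancel_right]

theorem lie_scalar_takiffFMat_mul_scalar_X (hBinv : ∀ x y z, B ⁅x, y⁆ z = B x ⁅y, z⁆)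
    (hdual : ∀ a b, B (Jlo a) (Jup b) = if a = b then 1 else 0) (ℓ : ℕ) (i j : Fin N) :
    ⁅Matrix.scalar (Fin N) (C (UniversalEnvelopingAlgebra.ι ℂ (takiffF ρ Jup Jlo ℓ 1 i j))),
        takiffFMat ρ Jup Jlo ℓ⁆ * Matrix.scalar (Fin N) X
      = ⁅takiffFMat ρ Jup Jlo ℓ - (Matrix.of (fElem ρ Jup Jlo)).map (takiffMonomial ℓ 0),
          (ρ (fElem ρ Jup Jlo i j)).map (algebraMap ℂ _)⁆ := by
  refine Matrix.ext fun k l => ?_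
  have hkl := lie_C_takiffSeries_mul_X ℓ (fElem ρ Jup Jlo i j) (fElem ρ Jup Jlo k l)
  rw [lie_fElem_fElem ρ hBinv hdual] at hkl
  rw [Matrix.lie_scalar_mul_scalar_apply, takiffFMat_apply, takiffF, hkl]
  simp only [map_sub, map_sum, map_smul, Algebra.smul_def, Ring.lie_def, Matrix.sub_apply,
    Matrix.mul_apply, Matrix.map_apply, Matrix.of_apply, takiffFMat_apply]
  simp only [Algebra.commutes, mul_sub, sub_mul, Finset.sum_sub_distrib]
  abel

end Takiff

theorem takiff_commutator_degree_one_general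
    {d N : ℕ} {g : Type} [LieRing g] [LieAlgebra ℂ g]
    (B : g →ₗ[ℂ] g →ₗ[ℂ] ℂ)
    (hBinv : ∀ x y z, B ⁅x, y⁆ z = B x ⁅y, z⁆)
    (Jup Jlo : Module.Basis (Fin d) ℂ g)
    (hdual : ∀ a b, B (Jlo a) (Jup b) = if a = b then 1 else 0)
    (ρ : g →ₗ⁅ℂ⁆ Matrix (Fin N) (Fin N) ℂ)
    (ℓ : ℕ)
    (i j : Fin N) (m : ℕ)
    (r : ℕ) (hr : m * ℓ - ℓ ≤ r) :
    (⁅(Polynomial.C (UniversalEnvelopingAlgebra.ι ℂ (takiffF ρ Jup Jlo ℓ 1 i j)) :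
        Polynomial (UniversalEnvelopingAlgebra ℂ (TruncPoly ℓ ⊗[ℂ] g))),
      (((takiffFMat ρ Jup Jlo ℓ) ^ m).trace)⁆).coeff r = 0 := by
  have hcomm := Matrix.lie_trace_pow_mul
    (lie_scalar_takiffFMat_mul_scalar_X ρ hBinv hdual ℓ i j) commute_X m
  rw [← coeff_mul_X, hcomm, coeff_neg, neg_eq_zero]
  refine coeff_eq_zero_of_natDegree_lt ((Matrix.natDegree_sum_trace_pow_mul_pow_le (a := ℓ)
    (fun k l => ?_) (Matrix.natDegree_lie_apply_le (a := 0) (b := 0) (fun k l => ?_)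
      (fun k l => ?_)) m).trans_lt ?_)
  · rw [takiffFMat_apply]
    exact natDegree_takiffSeries_le ℓ _
  · simp [takiffMonomial_apply]
  · simp [Polynomial.algebraMap_apply]
  · rw [Nat.sub_one_mul]
    omega

/-- for `m ≥ 1`, the polynomial `[ι(F^{(1)}_{ij}), tr F(u)ᵐ] ∈ U(𝔤_ℓ)[u]`
has degree strictly less than `mℓ − ℓ`: its coefficient of `uʳ` vanishes whenever
`r ≥ mℓ − ℓ`. -/
theorem takiff_commutator_degree_one
    {d N : ℕ} {g : Type} [LieRing g] [LieAlgebra ℂ g]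
    [FiniteDimensional ℂ g] [LieAlgebra.IsSimple ℂ g]
    (B : g →ₗ[ℂ] g →ₗ[ℂ] ℂ)
    (hBsymm : ∀ x y, B x y = B y x)
    (hBinv : ∀ x y z, B ⁅x, y⁆ z = B x ⁅y, z⁆)
    (hBnondeg : ∀ x, (∀ y, B x y = 0) → x = 0)
    (Jup Jlo : Module.Basis (Fin d) ℂ g)
    (hdual : ∀ a b, B (Jlo a) (Jup b) = if a = b then 1 else 0)
    (ρ : g →ₗ⁅ℂ⁆ Matrix (Fin N) (Fin N) ℂ)
    (hρ : Function.Injective ρ)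
    (ℓ : ℕ) (hℓ : 1 ≤ ℓ)
    (i j : Fin N) (m : ℕ) (hm : 1 ≤ m)
    (r : ℕ) (hr : m * ℓ - ℓ ≤ r) :
    (⁅(Polynomial.C (UniversalEnvelopingAlgebra.ι ℂ (takiffF ρ Jup Jlo ℓ 1 i j)) :
        Polynomial (UniversalEnvelopingAlgebra ℂ (TruncPoly ℓ ⊗[ℂ] g))),
      (((takiffFMat ρ Jup Jlo ℓ) ^ m).trace)⁆).coeff r = 0 :=
  takiff_commutator_degree_one_general B hBinv Jup Jlo hdual ρ ℓ i j m r hr
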